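/- For all natural numbers k, and parameters α, λ in a field of characteristic zero, (λ e^t)_{k,α} = Σ_{ℓ=0}^{k} (-1)_{k-ℓ,α} C(k,ℓ) ℓ! F_ℓ(t), as formal power series in t, where F_ℓ(t) = (λe^t+1)_{ℓ,α}/ℓ! and (-1)_{m,α} = ∏_{i=0}^{m-1}(-1-iα). -/

import Mathlib

open Finset

/-- The degenerate falling factorial `(x)_{n,α} = ∏_{i=0}^{n-1} (x - i·α)`. -/
def degFall {R : Type*} [CommRing R] (α x : R) (n : ℕ) : R :=
  ∏ i ∈ Finset.range n, (x - (i : R) * α)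

/-- The ordinary falling factorial `(x)_n = x(x-1)⋯(x-n+1)`. -/
def fall {R : Type*} [CommRing R] (x : R) (n : ℕ) : R :=
  ∏ i ∈ Finset.range n, (x - (i : R))

/-- Signed Stirling numbers of the first kind, via the standard recurrence. -/
def stirling1 : ℕ → ℕ → ℤ
  | 0, 0 => 1
  | 0, _ + 1 => 0
  | n + 1, 0 => -(n : ℤ) * stirling1 n 0
  | n + 1, k + 1 => stirling1 n k - (n : ℤ) * stirling1 n (k + 1)

/-- The Simsek numbers `y₁(n,k;λ) = (1/k!) Σ_{j=0}^{k} C(k,j) jⁿ λʲ`. -/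
noncomputable def simsek {F : Type*} [Field F] (lam : F) (n k : ℕ) : F :=
  (k.factorial : F)⁻¹ * ∑ j ∈ Finset.range (k + 1),
    (k.choose j : F) * (j : F) ^ n * lam ^ j

/-- The new type degenerate Simsek numbers
`y*₁,α(n,k;λ) = (1/k!) Σ_{ℓ=0}^{k} Σ_{j=0}^{ℓ} C(ℓ,j) α^{k-ℓ} s(k,ℓ) λʲ jⁿ`. -/
noncomputable def ystar {F : Type*} [Field F] (α lam : F) (n k : ℕ) : F :=
  (k.factorial : F)⁻¹ * ∑ ℓ ∈ Finset.range (k + 1), ∑ j ∈ Finset.range (ℓ + 1),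
    (ℓ.choose j : F) * α ^ (k - ℓ) * ((stirling1 k ℓ : ℤ) : F) * lam ^ j * (j : F) ^ n


lemma degFall_succ' {R : Type*} [CommRing R] (a x : R) (n : ℕ) :
    degFall a x (n + 1) = degFall a x n * (x - (n : R) * a) :=
  Finset.prod_range_succ _ _

lemma degFall_key {R : Type*} [CommRing R] (a x : R) (k : ℕ) :
    degFall a x k = ∑ ℓ ∈ Finset.range (k + 1),
      degFall a (-1) (k - ℓ) * (k.choose ℓ : R) * degFall a (x + 1) ℓ := by
  induction k with
  | zero => simp [degFall]
  | succ k ih =>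
    have hL : degFall a x (k + 1) = (∑ ℓ ∈ Finset.range (k + 1),
        degFall a (-1) (k - ℓ) * (k.choose ℓ : R) * degFall a (x + 1) ℓ) * (x - (k : R) * a) := by
      rw [degFall_succ', ih]
    rw [hL, Finset.sum_mul]
    rw [Finset.sum_range_succ' _ (k + 1)]
    have hsplit : ∀ ℓ ∈ Finset.range (k + 1),
        degFall a (-1) (k + 1 - (ℓ + 1)) * ((k + 1).choose (ℓ + 1) : R) * degFall a (x + 1) (ℓ + 1)
        = degFall a (-1) (k - ℓ) * (k.choose ℓ : R) * degFall a (x + 1) (ℓ + 1)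
          + degFall a (-1) (k - ℓ) * (k.choose (ℓ + 1) : R) * degFall a (x + 1) (ℓ + 1) := by
      intro ℓ hl
      have : k + 1 - (ℓ + 1) = k - ℓ := by omega
      rw [this, Nat.choose_succ_succ, Nat.cast_add]
      ring
    rw [Finset.sum_congr rfl hsplit, Finset.sum_add_distrib]
    have hS1 : (∑ ℓ ∈ Finset.range (k + 1),
          degFall a (-1) (k - ℓ) * (k.choose (ℓ + 1) : R) * degFall a (x + 1) (ℓ + 1))
        + degFall a (-1) (k + 1 - 0) * ((k + 1).choose 0 : R) * degFall a (x + 1) 0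
        = ∑ ℓ ∈ Finset.range (k + 1),
            degFall a (-1) (k + 1 - ℓ) * (k.choose ℓ : R) * degFall a (x + 1) ℓ := by
      rw [Finset.sum_range_succ (fun ℓ => degFall a (-1) (k - ℓ) * (k.choose (ℓ + 1) : R) *
            degFall a (x + 1) (ℓ + 1)) k,
          Finset.sum_range_succ' (fun ℓ => degFall a (-1) (k + 1 - ℓ) * (k.choose ℓ : R) *
            degFall a (x + 1) ℓ) k]
      simp only [Nat.choose_succ_self, Nat.cast_zero, mul_zero, zero_mul, add_zero]
      congr 1
      · apply Finset.sum_congr rfl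
        intro ℓ hl
        have : k + 1 - (ℓ + 1) = k - ℓ := by omega
        rw [this]
      · simp [degFall]
    rw [add_assoc, hS1, ← Finset.sum_add_distrib]
    apply Finset.sum_congr rfl
    intro ℓ hl
    have hle : ℓ ≤ k := by
      simp only [Finset.mem_range] at hl; omega
    have h1 : k + 1 - ℓ = (k - ℓ) + 1 := by omega
    rw [h1, degFall_succ' a (-1) (k - ℓ), degFall_succ' a (x + 1) ℓ]
    have h2 : ((k - ℓ : ℕ) : R) = (k : R) - (ℓ : R) := by
      rw [Nat.cast_sub hle]
    rw [h2]
    ring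

open PowerSeries in
/-- the formal power series identity
`(λeᵗ)_{k,α} = Σ_{ℓ=0}^{k} (-1)_{k-ℓ,α} C(k,ℓ) ℓ! F_ℓ(t)` where
`F_ℓ(t) = (λeᵗ+1)_{ℓ,α}/ℓ!`. -/
theorem degFall_lam_exp_eq_sum (F : Type*) [Field F] [CharZero F]
    (α lam : F) (k : ℕ) :
    degFall (C α) (C lam * PowerSeries.exp F) k =
      ∑ ℓ ∈ Finset.range (k + 1),
        C (degFall α (-1) (k - ℓ)) * (k.choose ℓ : F⟦X⟧) * (ℓ.factorial : F⟦X⟧) *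
          (C ((ℓ.factorial : F)⁻¹) *
            degFall (C α) (C lam * PowerSeries.exp F + 1) ℓ) := by
  rw [degFall_key (C α) (C lam * PowerSeries.exp F) k]
  apply Finset.sum_congr rfl
  intro ℓ _
  have h1 : C (degFall α (-1) (k - ℓ)) = degFall (C α) (-1) (k - ℓ) := by
    simp [degFall, map_prod]
  have h2 : ((ℓ.factorial : F⟦X⟧)) * C ((ℓ.factorial : F)⁻¹) = 1 := by
    have h3 : (ℓ.factorial : F⟦X⟧) = C (ℓ.factorial : F) := by simp
    rw [h3, ← map_mul, mul_inv_cancel₀, map_one]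
    exact_mod_cast Nat.factorial_ne_zero ℓ
  rw [h1]
  calc degFall (C α) (-1) (k - ℓ) * ((k.choose ℓ : F⟦X⟧)) *
        degFall (C α) (C lam * PowerSeries.exp F + 1) ℓ
      = degFall (C α) (-1) (k - ℓ) * ((k.choose ℓ : F⟦X⟧)) *
        ((ℓ.factorial : F⟦X⟧) * C ((ℓ.factorial : F)⁻¹)) *
        degFall (C α) (C lam * PowerSeries.exp F + 1) ℓ := by rw [h2]; ring
    _ = _ := by ring
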